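/- arXiv:2410.22123 — 2 statements merged into one kernel-verified Lean document; each statement's English description precedes it below -/
import Mathlib

section
/- Let D and D* be atomless Borel probability measures on ℝ with d_K(D, D*) ≥ ε for some 0 < ε < 1. Define buckets B_{i,j} = (q_{(i-1)2^{-j}}, q_{i·2^{-j}}] using the quantile function q of D*. Then there exist j ∈ [⌈lg(1/ε)⌉ + 2] and i ∈ [2^j] such that |D*(B_{i,j}) - D(B_{i,j})| ≥ max(ε/j², ε/(lg(1/ε)+3))/10. -/
/-!
Let `F`, `G` be the distribution functions of `D`, `D*` and `H(x) = F(q_x)`. Then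
`D(B_{i,j}) = H(i 2^{-j}) - H((i-1) 2^{-j})`, while `D*(B_{i,j}) = 2^{-j}` because `G` is
continuous. A point where `|F - G| > 3ε/4` yields a dyadic `x = k 2^{-J}`, `J = ⌈lg(1/ε)⌉ + 2`,
with `|H(x) - x| ≥ ε/2`. Following `x` down the dyadic tree writes `H(x) - x` as a sum of at most
one bucket discrepancy per level `j ≤ J`; if all of them were below the bound, the sum would be
at most `(2ε + ε)/10 < ε/2`, because `∑ 1/j² ≤ 2` and `J ≤ lg(1/ε) + 3`.
-/

open MeasureTheory

/-- The (generalized inverse) quantile function `q_x = sup{y : D*((-∞,y]) ≤ x}` of a measure,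
valued in `EReal`, with the special cases `q₀ = -∞` and `q₁ = +∞`. -/
noncomputable def quant (μ : Measure ℝ) (x : ℝ) : EReal :=
  if x = 0 then ⊥ else if x = 1 then ⊤ else
    sSup {z : EReal | ∃ y : ℝ, z = (y : EReal) ∧ (μ (Set.Iic y)).toReal ≤ x}

/-- The dyadic bucket `B_{i,j} = (q_{(i-1)·2^{-j}}, q_{i·2^{-j}}]` determined by the quantile
function of `μ`. -/
noncomputable def bucket (μ : Measure ℝ) (i j : ℕ) : Set ℝ :=
  {y : ℝ | quant μ (((i : ℝ) - 1) * 2 ^ (-(j : ℤ))) < (y : EReal) ∧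
    (y : EReal) ≤ quant μ ((i : ℝ) * 2 ^ (-(j : ℤ)))}

/-- The Kolmogorov distance between measures on `ℝ`. -/
noncomputable def kolDist (μ ν : Measure ℝ) : ℝ :=
  ⨆ x : ℝ, |(μ (Set.Iic x)).toReal - (ν (Set.Iic x)).toReal|

open ProbabilityTheory Set

theorem abs_le_sum_of_dyadic_increments (φ : ℝ → ℝ) (b : ℕ → ℝ) (h0 : φ 0 = 0) (h1 : φ 1 = 0)
    (J : ℕ) (hb : ∀ j ∈ Finset.Icc 1 J, ∀ i : ℕ, 1 ≤ i → i ≤ 2 ^ j →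
      |φ (i / 2 ^ j) - φ ((i - 1) / 2 ^ j)| ≤ b j)
    {k : ℕ} (hk : k ≤ 2 ^ J) : |φ (k / 2 ^ J)| ≤ ∑ j ∈ Finset.Icc 1 J, b j := by
  induction J generalizing k with
  | zero =>
    interval_cases k <;> simp [h0, h1]
  | succ J ih =>
    have ih' : ∀ {m : ℕ}, m ≤ 2 ^ J → |φ (m / 2 ^ J)| ≤ ∑ j ∈ Finset.Icc 1 J, b j :=
      ih fun j hj => hb j (Finset.Icc_subset_Icc_right (by omega) hj)
    have hb' := hb (J + 1) (Finset.mem_Icc.2 ⟨by omega, le_rfl⟩)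
    rw [Finset.sum_Icc_succ_top (by omega)]
    obtain ⟨n, rfl | rfl⟩ := Nat.even_or_odd' k
    · have hn : n ≤ 2 ^ J := by rw [pow_succ] at hk; omega
      have hpoint : (↑(2 * n) : ℝ) / 2 ^ (J + 1) = n / 2 ^ J := by
        push_cast; rw [pow_succ]; field_simp
      have hb_nonneg : 0 ≤ b (J + 1) := (abs_nonneg _).trans (hb' 1 le_rfl Nat.one_le_two_pow)
      rw [hpoint]
      linarith [ih' hn]
    · have hn : n ≤ 2 ^ J := by rw [pow_succ] at hk; omega
      have hpoint : ((↑(2 * n + 1) : ℝ) - 1) / 2 ^ (J + 1) = n / 2 ^ J := by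
        push_cast; rw [pow_succ]; field_simp; ring
      have hincr := hb' (2 * n + 1) (by omega) hk
      rw [hpoint] at hincr
      linarith [ih' hn, abs_sub_abs_le_abs_sub (φ (↑(2 * n + 1) / 2 ^ (J + 1))) (φ (n / 2 ^ J))]

theorem exists_grid_abs_sub_ge (ψ : ℝ → ℝ) {t c : ℝ} (ht0 : 0 ≤ t) (ht1 : t ≤ 1) (hc0 : 0 ≤ c)
    (hc1 : c ≤ 1) (hlt : ∀ x, x < t → ψ x ≤ c) (hgt : ∀ x, t < x → c ≤ ψ x)
    {N : ℕ} (hN : 0 < N) : ∃ k ≤ N, |c - t| - 1 / N ≤ |ψ (k / N) - k / N| := by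
  have hN' : (0 : ℝ) < N := by exact_mod_cast hN
  rcases lt_trichotomy c t with hct | rfl | htc
  · obtain ⟨k, hk⟩ : ∃ k : ℕ, ⌈t * N⌉₊ = k + 1 :=
      Nat.exists_eq_add_one.2 (Nat.ceil_pos.2 (by nlinarith))
    have hk_lt : (k : ℝ) < t * N := by
      have := Nat.ceil_lt_add_one (by positivity : 0 ≤ t * N)
      rw [hk] at this; push_cast at this; linarith
    have hk_ge : t * N ≤ k + 1 := by exact_mod_cast hk ▸ Nat.le_ceil (t * N)
    have hx_lt : (k : ℝ) / N < t := by rw [div_lt_iff₀ hN']; exact hk_lt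
    have hx_ge : t - 1 / N ≤ k / N := by
      rw [sub_le_iff_le_add, ← add_div, le_div_iff₀ hN']; exact hk_ge
    refine ⟨k, Nat.cast_le.1 (show (k : ℝ) ≤ N by nlinarith), ?_⟩
    rw [abs_of_neg (by linarith)]
    linarith [hlt _ hx_lt, neg_abs_le (ψ (k / N) - k / N)]
  · refine ⟨0, Nat.zero_le _, ?_⟩
    simp only [sub_self, abs_zero, zero_sub]
    linarith [abs_nonneg (ψ (0 / N) - 0 / N), one_div_pos.2 hN']
  · set k := ⌊t * N⌋₊ + 1
    have hk_gt : t * N < k := by push_cast [k]; exact Nat.lt_floor_add_one _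
    have hk_le : (k : ℝ) ≤ t * N + 1 := by
      push_cast [k]; linarith [Nat.floor_le (by positivity : 0 ≤ t * N)]
    have hx_gt : t < k / N := by rw [lt_div_iff₀ hN']; exact hk_gt
    have hx_le : (k : ℝ) / N ≤ t + 1 / N := by
      rw [div_le_iff₀ hN', add_mul, one_div_mul_cancel hN'.ne']; exact hk_le
    refine ⟨k, Nat.add_one_le_of_lt ((Nat.floor_lt (by positivity)).2 (by nlinarith)), ?_⟩
    rw [abs_of_pos (by linarith)]
    linarith [hgt _ hx_gt, le_abs_self (ψ (k / N) - k / N)]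

lemma sum_Icc_max_div_sq_le {ε M : ℝ} (hε : 0 ≤ ε) (hM : 0 < M) {J : ℕ} (hJ : (J : ℝ) ≤ M) :
    ∑ j ∈ Finset.Icc 1 J, max (ε / (j : ℝ) ^ 2) (ε / M) ≤ 3 * ε := by
  have hsq : ∑ j ∈ Finset.Icc 1 J, ((j : ℝ) ^ 2)⁻¹ ≤ 2 := by
    have : Finset.Icc 1 J = Finset.Ioo 0 (J + 1) := by ext; simp; omega
    simpa [this] using sum_Ioo_inv_sq_le (α := ℝ) 0 (J + 1)
  calc ∑ j ∈ Finset.Icc 1 J, max (ε / (j : ℝ) ^ 2) (ε / M)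
      ≤ ∑ j ∈ Finset.Icc 1 J, (ε * ((j : ℝ) ^ 2)⁻¹ + ε / M) :=
        Finset.sum_le_sum fun j _ => max_le_add_of_nonneg (by positivity) (by positivity)
    _ = ε * ∑ j ∈ Finset.Icc 1 J, ((j : ℝ) ^ 2)⁻¹ + J * (ε / M) := by
        rw [Finset.sum_add_distrib, ← Finset.mul_sum, Finset.sum_const, Nat.card_Icc, nsmul_eq_mul,
          Nat.add_sub_cancel]
    _ ≤ ε * 2 + M * (ε / M) := by gcongr
    _ = 3 * ε := by field_simp; ring

lemma one_div_two_pow_ceil_logb_le {ε : ℝ} (hε : 0 < ε) :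
    1 / (2 : ℝ) ^ (⌈Real.logb 2 (1 / ε)⌉₊ + 2) ≤ ε / 4 := by
  have h : 1 / ε ≤ 2 ^ ⌈Real.logb 2 (1 / ε)⌉₊ :=
    calc 1 / ε = 2 ^ Real.logb 2 (1 / ε) :=
          (Real.rpow_logb two_pos (by norm_num) (by positivity)).symm
      _ ≤ 2 ^ (⌈Real.logb 2 (1 / ε)⌉₊ : ℝ) :=
          Real.rpow_le_rpow_of_exponent_le one_le_two (Nat.le_ceil _)
      _ = 2 ^ ⌈Real.logb 2 (1 / ε)⌉₊ := Real.rpow_natCast 2 _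
  rw [div_le_iff₀ hε] at h
  rw [div_le_div_iff₀ (by positivity) four_pos, pow_add]
  linarith

lemma continuous_cdf (μ : Measure ℝ) [IsProbabilityMeasure μ] [NullSingletonClass μ] :
    Continuous (cdf μ) := by
  refine continuous_iff_continuousAt.2 fun a => ?_
  rw [(monotone_cdf μ).continuousAt_iff_leftLim_eq_rightLim, StieltjesFunction.rightLim_eq]
  have h := (cdf μ).measure_singleton a
  rw [measure_cdf, measure_singleton, eq_comm, ENNReal.ofReal_eq_zero, sub_nonpos] at h
  exact le_antisymm ((monotone_cdf μ).leftLim_le le_rfl) h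

section Quantile

variable {μ : Measure ℝ}

lemma quant_mono {a b : ℝ} (ha : 0 ≤ a) (hab : a ≤ b) (hb : b ≤ 1) :
    quant μ a ≤ quant μ b := by
  unfold quant
  split_ifs <;> first
    | exact bot_le
    | exact le_top
    | (exfalso; order)
    | exact sSup_le_sSup fun z ⟨y, hz, hy⟩ => ⟨y, hz, hy.trans hab⟩

variable [IsProbabilityMeasure μ]

lemma coe_le_quant {x y : ℝ} (hx : 0 < x) (hy : cdf μ y ≤ x) : (y : EReal) ≤ quant μ x := by
  unfold quant
  rw [if_neg hx.ne']
  split_ifs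
  · exact le_top
  · exact le_sSup ⟨y, rfl, by rwa [← measureReal_def, ← cdf_eq_real]⟩

lemma quant_le_coe {x y : ℝ} (hy : x < cdf μ y) : quant μ x ≤ y := by
  unfold quant
  split_ifs
  · exact bot_le
  · linarith [cdf_le_one μ y]
  · refine sSup_le ?_
    rintro _ ⟨z, rfl, hz⟩
    rw [← measureReal_def, ← cdf_eq_real] at hz
    exact EReal.coe_le_coe_iff.2 ((monotone_cdf μ).reflect_lt (hz.trans_lt hy)).le

lemma exists_quant_eq_coe [NullSingletonClass μ] {x : ℝ} (hx0 : 0 < x) (hx1 : x < 1) :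
    ∃ s, cdf μ s = x ∧ quant μ x = s := by
  obtain ⟨a, ha⟩ := ((tendsto_cdf_atBot μ).eventually (gt_mem_nhds hx0)).exists
  obtain ⟨b, hb⟩ := ((tendsto_cdf_atTop μ).eventually (lt_mem_nhds hx1)).exists
  set S := {y | cdf μ y ≤ x}
  have hS : S.Nonempty := ⟨a, ha.le⟩
  have hS_bdd : BddAbove S := ⟨b, fun y hy => ((monotone_cdf μ).reflect_lt (hy.trans_lt hb)).le⟩
  obtain ⟨c, hc⟩ : x ∈ range (cdf μ) :=
    intermediate_value_univ a b (continuous_cdf μ) ⟨ha.le, hb.le⟩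
  have hsup : cdf μ (sSup S) = x :=
    le_antisymm ((isClosed_le (continuous_cdf μ) continuous_const).csSup_mem hS hS_bdd)
      (hc ▸ monotone_cdf μ (le_csSup hS_bdd hc.le))
  refine ⟨sSup S, hsup, le_antisymm ?_ (coe_le_quant hx0 hsup.le)⟩
  rw [quant, if_neg hx0.ne', if_neg hx1.ne]
  refine sSup_le ?_
  rintro _ ⟨y, rfl, hy⟩
  rw [← measureReal_def, ← cdf_eq_real] at hy
  exact EReal.coe_le_coe_iff.2 (le_csSup hS_bdd hy)

end Quantile

noncomputable def cdfAtQuant (ν μ : Measure ℝ) (x : ℝ) : ℝ :=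
  ν.real {y : ℝ | (y : EReal) ≤ quant μ x}

section CdfAtQuant

variable {ν μ : Measure ℝ}

lemma measurableSet_coe_le (c : EReal) : MeasurableSet {y : ℝ | (y : EReal) ≤ c} :=
  measurableSet_le measurable_coe_real_ereal measurable_const

@[simp] lemma cdfAtQuant_zero : cdfAtQuant ν μ 0 = 0 := by
  simp [cdfAtQuant, quant]

@[simp] lemma cdfAtQuant_one [IsProbabilityMeasure ν] : cdfAtQuant ν μ 1 = 1 := by
  simp [cdfAtQuant, quant]

lemma cdfAtQuant_self [IsProbabilityMeasure μ] [NullSingletonClass μ] {x : ℝ} (hx0 : 0 ≤ x)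
    (hx1 : x ≤ 1) : cdfAtQuant μ μ x = x := by
  rcases hx0.eq_or_lt with rfl | hx0
  · exact cdfAtQuant_zero (ν := μ)
  rcases hx1.eq_or_lt with rfl | hx1
  · exact cdfAtQuant_one (ν := μ)
  obtain ⟨s, hs, hq⟩ := exists_quant_eq_coe (μ := μ) hx0 hx1
  simp only [cdfAtQuant, hq, EReal.coe_le_coe_iff]
  rw [← hs, cdf_eq_real]
  rfl

variable [IsFiniteMeasure ν] [IsProbabilityMeasure μ]

lemma measureReal_Iic_le_cdfAtQuant {x y : ℝ} (hx : 0 < x) (hy : cdf μ y ≤ x) :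
    ν.real (Iic y) ≤ cdfAtQuant ν μ x :=
  measureReal_mono fun _ hz => (EReal.coe_le_coe_iff.2 hz).trans (coe_le_quant hx hy)

lemma cdfAtQuant_le_measureReal_Iic {x y : ℝ} (hy : x < cdf μ y) :
    cdfAtQuant ν μ x ≤ ν.real (Iic y) :=
  measureReal_mono fun _ hz => EReal.coe_le_coe_iff.1 (le_trans hz (quant_le_coe hy))

end CdfAtQuant

section Bucket

variable {ν μ : Measure ℝ} [IsFiniteMeasure ν]

lemma measureReal_bucket {i j : ℕ} (hi1 : 1 ≤ i) (hi2 : i ≤ 2 ^ j) :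
    ν.real (bucket μ i j) = cdfAtQuant ν μ (i / 2 ^ j) - cdfAtQuant ν μ ((i - 1) / 2 ^ j) := by
  have hi1' : (1 : ℝ) ≤ i := by exact_mod_cast hi1
  have hi2' : (i : ℝ) ≤ 2 ^ j := by exact_mod_cast hi2
  have hpow : (0 : ℝ) < 2 ^ j := by positivity
  have hle : quant μ ((i - 1) / 2 ^ j) ≤ quant μ (i / 2 ^ j) :=
    quant_mono (by positivity) (by gcongr; linarith) ((div_le_one hpow).2 hi2')
  have hset : bucket μ i j =
      {y : ℝ | (y : EReal) ≤ quant μ (i / 2 ^ j)} \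
        {y | (y : EReal) ≤ quant μ ((i - 1) / 2 ^ j)} := by
    ext y
    simp only [bucket, zpow_neg, zpow_natCast, ← div_eq_mul_inv, mem_ofPred_eq, Set.mem_sdiff,
      not_le]
    exact and_comm
  have hsub : {y : ℝ | (y : EReal) ≤ quant μ ((i - 1) / 2 ^ j)} ⊆
      {y | (y : EReal) ≤ quant μ (i / 2 ^ j)} := fun _ hy => le_trans hy hle
  rw [hset, measureReal_sdiff hsub (measurableSet_coe_le _)]
  rfl

lemma measureReal_bucket_self [IsProbabilityMeasure μ] [NullSingletonClass μ] {i j : ℕ}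
    (hi1 : 1 ≤ i) (hi2 : i ≤ 2 ^ j) : μ.real (bucket μ i j) = 1 / 2 ^ j := by
  have hi1' : (1 : ℝ) ≤ i := by exact_mod_cast hi1
  have hi2' : (i : ℝ) ≤ 2 ^ j := by exact_mod_cast hi2
  have hpow : (0 : ℝ) < 2 ^ j := by positivity
  rw [measureReal_bucket hi1 hi2, cdfAtQuant_self (by positivity) ((div_le_one hpow).2 hi2'),
    cdfAtQuant_self (div_nonneg (by linarith) hpow.le)
      ((div_le_one hpow).2 (by linarith))]
  ring

lemma abs_measureReal_bucket_sub [IsProbabilityMeasure μ] [NullSingletonClass μ] {i j : ℕ} (hi1 : 1 ≤ i) (hi2 : i ≤ 2 ^ j) :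
    |μ.real (bucket μ i j) - ν.real (bucket μ i j)| =
      |(cdfAtQuant ν μ (i / 2 ^ j) - i / 2 ^ j) -
        (cdfAtQuant ν μ ((i - 1) / 2 ^ j) - (i - 1) / 2 ^ j)| := by
  rw [measureReal_bucket_self hi1 hi2, measureReal_bucket hi1 hi2, abs_sub_comm]
  congr 1
  ring

end Bucket

theorem exists_bucket_discrepancy_general (D Dstar : Measure ℝ) [IsProbabilityMeasure D]
    [IsProbabilityMeasure Dstar] (hDstar : ∀ y : ℝ, Dstar {y} = 0)
    (ε : ℝ) (hε0 : 0 < ε) (hε1 : ε < 1) (hfar : ε ≤ kolDist D Dstar) :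
    ∃ j i : ℕ, 1 ≤ j ∧ j ≤ ⌈Real.logb 2 (1 / ε)⌉₊ + 2 ∧ 1 ≤ i ∧ i ≤ 2 ^ j ∧
      max (ε / (j : ℝ) ^ 2) (ε / (Real.logb 2 (1 / ε) + 3)) / 10 ≤
        |(Dstar (bucket Dstar i j)).toReal - (D (bucket Dstar i j)).toReal| := by
  have : NullSingletonClass Dstar := ⟨hDstar⟩
  set L := Real.logb 2 (1 / ε)
  set J := ⌈L⌉₊ + 2
  have hL : 0 ≤ L := Real.logb_nonneg one_lt_two (by rw [le_div_iff₀ hε0]; linarith)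
  have hJ : (J : ℝ) ≤ L + 3 := by push_cast [J]; linarith [Nat.ceil_lt_add_one hL]
  have hmesh : 1 / (2 : ℝ) ^ J ≤ ε / 4 := one_div_two_pow_ceil_logb_le hε0
  obtain ⟨x₀, hx₀⟩ : ∃ x₀, 3 * ε / 4 < |D.real (Iic x₀) - cdf Dstar x₀| := by
    simp only [cdf_eq_real]
    exact exists_lt_of_lt_ciSup (hfar.trans_lt' (by linarith))
  obtain ⟨k, hk, hk_far⟩ := exists_grid_abs_sub_ge (cdfAtQuant D Dstar) (cdf_nonneg _ x₀)
    (cdf_le_one _ x₀) measureReal_nonneg measureReal_le_one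
    (fun _ hx => cdfAtQuant_le_measureReal_Iic hx)
    (fun _ hx => measureReal_Iic_le_cdfAtQuant ((cdf_nonneg _ x₀).trans_lt hx) hx.le)
    (N := 2 ^ J) (by positivity)
  by_contra! hcon
  have hchain := abs_le_sum_of_dyadic_increments (fun x => cdfAtQuant D Dstar x - x)
    (fun j => max (ε / (j : ℝ) ^ 2) (ε / (L + 3)) / 10) (by simp) (by simp) J
    (fun j hj i hi1 hi2 => (abs_measureReal_bucket_sub (ν := D) hi1 hi2).symm.le.trans
      (hcon j i (Finset.mem_Icc.1 hj).1 (Finset.mem_Icc.1 hj).2 hi1 hi2).le) (k := k) hk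
  rw [← Finset.sum_div] at hchain
  have hsum := sum_Icc_max_div_sq_le hε0.le (by linarith : 0 < L + 3) hJ
  push_cast at hk_far
  linarith

/-- Main structural lemma: if two atomless probability measures are `ε`-far in Kolmogorov
distance, then some dyadic bucket `B_{i,j}` (with `j ∈ [⌈lg(1/ε)⌉+2]`, `i ∈ [2^j]`) of `D*`
witnesses a probability discrepancy of at least `max(ε/j², ε/(lg(1/ε)+3))/10`. -/
theorem exists_bucket_discrepancy (D Dstar : Measure ℝ) [IsProbabilityMeasure D]
    [IsProbabilityMeasure Dstar] (hD : ∀ y : ℝ, D {y} = 0) (hDstar : ∀ y : ℝ, Dstar {y} = 0)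
    (ε : ℝ) (hε0 : 0 < ε) (hε1 : ε < 1) (hfar : ε ≤ kolDist D Dstar) :
    ∃ j i : ℕ, 1 ≤ j ∧ j ≤ ⌈Real.logb 2 (1 / ε)⌉₊ + 2 ∧ 1 ≤ i ∧ i ≤ 2 ^ j ∧
      max (ε / (j : ℝ) ^ 2) (ε / (Real.logb 2 (1 / ε) + 3)) / 10 ≤
        |(Dstar (bucket Dstar i j)).toReal - (D (bucket Dstar i j)).toReal| :=
  exists_bucket_discrepancy_general D Dstar hDstar ε hε0 hε1 hfar
end

section
/- For every ε ∈ (0, 1/2) and every sufficiently large constant c, the total number of samples used per level, namely ⌈2^j / (lg(1/ε))³⌉ · c · min(1/ε², (lg(1/ε)+3)³/(2^j ε²)), is O(1/ε²) uniformly over j ∈ [⌈lg(1/ε)⌉ + 2]. -/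
/-! Batches of size `b = (lg(1/ε))³` cut the `x = 2^j` buckets into `⌈x/b⌉` batches. If `x ≤ b`
there is a single batch of at most `1/ε²` samples; otherwise `⌈x/b⌉ < 2x/b`, and the factor `x`
cancels against the per-batch cost `(lg(1/ε)+3)³/(x ε²)`, leaving `2(1 + 3/lg(1/ε))³/ε² ≤ 128/ε²`
because `lg(1/ε) > 1`. -/

open Real

lemma ceil_div_mul_min_le_max {b x N M : ℝ} (hb : 0 < b) (hx : 0 < x) (hN : 0 ≤ N)
    (hM : 0 ≤ M) : (⌈x / b⌉₊ : ℝ) * min N (M / x) ≤ max N (2 * M / b) := by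
  rcases le_or_gt x b with hxb | hbx
  · have hceil : (⌈x / b⌉₊ : ℝ) ≤ 1 := by
      exact_mod_cast Nat.ceil_le.mpr (by simpa using (div_le_one hb).mpr hxb)
    calc (⌈x / b⌉₊ : ℝ) * min N (M / x) ≤ 1 * N :=
          mul_le_mul hceil (min_le_left _ _) (le_min hN (by positivity)) zero_le_one
      _ ≤ max N (2 * M / b) := by simp
  · have hceil : (⌈x / b⌉₊ : ℝ) ≤ 2 * (x / b) :=
      (Nat.ceil_lt_two_mul (by linarith [(one_lt_div hb).mpr hbx])).le
    calc (⌈x / b⌉₊ : ℝ) * min N (M / x) ≤ 2 * (x / b) * (M / x) :=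
          mul_le_mul hceil (min_le_right _ _) (le_min hN (by positivity)) (by positivity)
      _ = 2 * M / b := by field_simp
      _ ≤ max N (2 * M / b) := le_max_right _ _

lemma one_lt_logb_two_one_div {ε : ℝ} (hε : 0 < ε) (hε2 : ε < 1 / 2) :
    1 < logb 2 (1 / ε) := by
  rw [lt_logb_iff_rpow_lt one_lt_two (by positivity), rpow_one, lt_div_iff₀ hε]
  linarith

lemma add_three_pow_three_le {L : ℝ} (hL : 1 ≤ L) : (L + 3) ^ 3 ≤ 64 * L ^ 3 := by
  calc (L + 3) ^ 3 ≤ (4 * L) ^ 3 := by gcongr; linarith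
    _ = 64 * L ^ 3 := by ring

/-- The total number of samples used at each level `j`, namely
`⌈2^j/(lg(1/ε))³⌉ · c · min(1/ε², (lg(1/ε)+3)³/(2^j ε²))`, is `O(1/ε²)` uniformly over
`ε ∈ (0,1/2)` and `j ∈ [⌈lg(1/ε)⌉+2]`. -/
theorem samples_per_level_bound :
    ∃ C : ℝ, 0 < C ∧ ∀ c : ℝ, 1 ≤ c → ∀ ε : ℝ, 0 < ε → ε < 1 / 2 →
      ∀ j : ℕ, 1 ≤ j → j ≤ ⌈Real.logb 2 (1 / ε)⌉₊ + 2 →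
        (⌈(2 : ℝ) ^ j / (Real.logb 2 (1 / ε)) ^ 3⌉₊ : ℝ) *
            (c * min (1 / ε ^ 2) ((Real.logb 2 (1 / ε) + 3) ^ 3 / (2 ^ j * ε ^ 2))) ≤
          C * c * (1 / ε ^ 2) := by
  refine ⟨128, by norm_num, fun c hc ε hε hε2 j _ _ => ?_⟩
  set L := logb 2 (1 / ε)
  have hL : 1 < L := one_lt_logb_two_one_div hε hε2
  have hbatches := ceil_div_mul_min_le_max (b := L ^ 3) (x := (2 : ℝ) ^ j) (N := 1 / ε ^ 2)
    (M := (L + 3) ^ 3 / ε ^ 2) (by positivity) (by positivity) (by positivity) (by positivity)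
  have hmax : max (1 / ε ^ 2) (2 * ((L + 3) ^ 3 / ε ^ 2) / L ^ 3) ≤ 128 * (1 / ε ^ 2) := by
    refine max_le (by linarith [one_div_pos.mpr (pow_pos hε 2)]) ?_
    rw [div_le_iff₀ (by positivity)]
    calc 2 * ((L + 3) ^ 3 / ε ^ 2) = 2 * (L + 3) ^ 3 * (1 / ε ^ 2) := by ring
      _ ≤ 2 * (64 * L ^ 3) * (1 / ε ^ 2) := by
          gcongr; exact add_three_pow_three_le hL.le
      _ = 128 * (1 / ε ^ 2) * L ^ 3 := by ring
  calc (⌈(2 : ℝ) ^ j / L ^ 3⌉₊ : ℝ) * (c * min (1 / ε ^ 2) ((L + 3) ^ 3 / (2 ^ j * ε ^ 2)))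
        = c * ((⌈(2 : ℝ) ^ j / L ^ 3⌉₊ : ℝ) *
            min (1 / ε ^ 2) ((L + 3) ^ 3 / ε ^ 2 / 2 ^ j)) := by
          rw [div_mul_eq_div_div_swap]; ring
    _ ≤ c * (128 * (1 / ε ^ 2)) :=
          mul_le_mul_of_nonneg_left (hbatches.trans hmax) (by linarith)
    _ = 128 * c * (1 / ε ^ 2) := by ring
end
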